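/- Let M be a monoid and E: A →^κ B →^σ M a Schreier extension of an M-semimodule A by M. Choose representatives u_x (x ∈ M) with u_1 = 0 and let f be the corresponding factor set. Then the map β: B_f → B, β(a,x) = κ(a) + u_x, is a monoid homomorphism and (1_A, β, 1_M) is a morphism of extensions; hence E_f is congruent to E. -/

import Mathlib

universe u v

section SchreierSemimodule

/- Throughout, `M` is a (multiplicatively written) monoid and an `M`-semimodule is an
additively written abelian monoid `A` together with a `DistribMulAction` of `M` on `A`,
i.e. an action satisfying `x • (a + a') = x • a + x • a'`, `x • 0 = 0`,
`(x * y) • a = x • (y • a)` and `1 • a = a`. -/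

variable (M : Type u) (A : Type v) [Monoid M] [AddCommMonoid A] [DistribMulAction M A]

/-- `u` is a representative over `x ∈ M` for the sequence `A →^κ B →^σ M`:
`σ u = x` and every `b ∈ σ⁻¹(x)` can be written uniquely as `b = κ a + u`. -/
def IsRepOf {B : Type*} [AddMonoid B] (κ : A →+ B) (σ : B → M) (x : M) (u : B) : Prop :=
  σ u = x ∧ ∀ b : B, σ b = x → ∃! a : A, b = κ a + u

/-- A Schreier extension of the `M`-semimodule `A` by the monoid `M`:  a sequence
`A →^κ B →^σ M` of monoids (`σ` being a homomorphism from the additively written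
monoid `B` to the multiplicatively written monoid `M`) such that `κ` is injective,
`σ` is surjective, `κ(A) = σ⁻¹(1)`, every `x ∈ M` admits a representative, and
moreover `b + κ a = κ (σ b • a) + b` for all `a ∈ A`, `b ∈ B`. -/
structure SchreierExtension where
  /-- the middle monoid of the extension -/
  B : Type (max u v)
  [instB : AddMonoid B]
  κ : A →+ B
  σ : B → M
  sigma_zero : σ 0 = 1
  sigma_add : ∀ b₁ b₂ : B, σ (b₁ + b₂) = σ b₁ * σ b₂
  kappa_inj : Function.Injective κ
  sigma_surj : Function.Surjective σ
  range_eq : ∀ b : B, σ b = 1 ↔ b ∈ Set.range κ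
  rep_exists : ∀ x : M, ∃ u : B, IsRepOf M A κ σ x u
  compat : ∀ (a : A) (b : B), b + κ a = κ (σ b • a) + b

attribute [instance] SchreierExtension.instB

variable {M A}

/-- `u` is a representative of the Schreier extension `E` over `x`. -/
def SchreierExtension.IsRep (E : SchreierExtension M A) (x : M) (u : E.B) : Prop :=
  IsRepOf M A E.κ E.σ x u

variable {A' : Type v} [AddCommMonoid A'] [DistribMulAction M A']

/-- `(α, β, 1_M)` is a morphism of Schreier extensions from `E` to `E'`:  the two squares
commute and `β` carries representatives to representatives. -/
def IsSchreierHom (E : SchreierExtension M A) (E' : SchreierExtension M A')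
    (α : A →+ A') (β : E.B →+ E'.B) : Prop :=
  (∀ a : A, β (E.κ a) = E'.κ (α a)) ∧ (∀ b : E.B, E'.σ (β b) = E.σ b) ∧
    ∀ (x : M) (u : E.B), E.IsRep x u → E'.IsRep x (β u)

/-- Two Schreier extensions of the `M`-semimodule `A` by `M` are congruent if there is a
monoid homomorphism between the middle monoids which commutes with the inclusions and the
projections and carries representatives to representatives, i.e. a morphism of the form
`(1_A, β, 1_M)`. -/
def SchreierCongruent (E E' : SchreierExtension M A) : Prop :=
  ∃ β : E.B →+ E'.B, IsSchreierHom E E' (AddMonoidHom.id A) β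

end SchreierSemimodule


section Cocycles

variable (M : Type u) (A : Type v) [Monoid M] [AddCommMonoid A] [DistribMulAction M A]

/-- A (normalized) `2`-cocycle of the monoid `M` with coefficients in the `M`-semimodule
`A`: `f (x, 1) = 0 = f (1, y)` and `x • f (y, z) + f (x, y*z) = f (x*y, z) + f (x, y)`. -/
def IsCocycle (f : M → M → A) : Prop :=
  (∀ x : M, f x 1 = 0) ∧ (∀ y : M, f 1 y = 0) ∧
    ∀ x y z : M, x • f y z + f x (y * z) = f (x * y) z + f x y

/-- The type of (normalized) `2`-cocycles of `M` with coefficients in `A`. -/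
abbrev Cocycle : Type (max u v) := {f : M → M → A // IsCocycle M A f}

/-- The zero `2`-cocycle. -/
def zeroCocycle : Cocycle M A :=
  ⟨fun _ _ => (0 : A), fun _ => rfl, fun _ => rfl, by intro x y z; simp⟩

/-- Two `2`-cocycles `f, f'` are strongly cohomologous if there is a function
`g : M → U(A)` into the group of invertible elements of `A` with `g 1 = 0` and
`f (x, y) = f' (x, y) + x • g y − g (x*y) + g x` for all `x, y ∈ M`. -/
def StronglyCohomologous (f f' : M → M → A) : Prop :=
  ∃ g : M → AddUnits A, g 1 = 0 ∧
    ∀ x y : M, f x y = f' x y + x • (g y : A) + ((-(g (x * y)) : AddUnits A) : A) + (g x : A)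

/-- Two `2`-cocycles `f, f'` are cohomologous if there are functions `g₁, g₂ : M → A` with
`g₁ 1 = 0 = g₂ 1` and
`f (x,y) + x • g₁ y + g₁ x + g₂ (x*y) = f' (x,y) + x • g₂ y + g₂ x + g₁ (x*y)`. -/
def Cohomologous (f f' : M → M → A) : Prop :=
  ∃ g₁ g₂ : M → A, g₁ 1 = 0 ∧ g₂ 1 = 0 ∧
    ∀ x y : M, f x y + x • g₁ y + g₁ x + g₂ (x * y)
      = f' x y + x • g₂ y + g₂ x + g₁ (x * y)

variable {M A}

/-- The underlying set `B_f = A × M` of the Schreier extension `E_f` associated with a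
`2`-cocycle `f`. -/
@[ext] structure Bf (f : Cocycle M A) where
  a : A
  x : M

namespace Bf

variable (f : Cocycle M A)

/-- The composition `(a₁, x) + (a₂, y) = (a₁ + x • a₂ + f (x, y), x * y)` on `B_f`. -/
protected def add (p q : Bf f) : Bf f := ⟨p.a + p.x • q.a + f.1 p.x q.x, p.x * q.x⟩

instance : Zero (Bf f) := ⟨⟨0, 1⟩⟩
instance : Add (Bf f) := ⟨Bf.add f⟩

instance : AddMonoid (Bf f) where
  nsmul := nsmulRec
  add_assoc p q r := by
    show (Bf.add f (Bf.add f p q) r) = Bf.add f p (Bf.add f q r)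
    unfold Bf.add
    have h := f.2.2.2 p.x q.x r.x
    simp only [Bf.mk.injEq]
    refine ⟨?_, mul_assoc _ _ _⟩
    calc p.a + p.x • q.a + f.1 p.x q.x + (p.x * q.x) • r.a + f.1 (p.x * q.x) r.x
        = p.a + p.x • q.a + p.x • (q.x • r.a) + (f.1 (p.x * q.x) r.x + f.1 p.x q.x) := by
          rw [mul_smul]; abel
      _ = p.a + p.x • q.a + p.x • (q.x • r.a) + (p.x • f.1 q.x r.x + f.1 p.x (q.x * r.x)) := by
          rw [h]
      _ = p.a + p.x • (q.a + q.x • r.a + f.1 q.x r.x) + f.1 p.x (q.x * r.x) := by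
          rw [smul_add, smul_add]; abel
  zero_add p := by
    show Bf.add f ⟨0, 1⟩ p = p
    unfold Bf.add
    cases p with
    | mk a x => simp [f.2.2.1 x]
  add_zero p := by
    show Bf.add f p ⟨0, 1⟩ = p
    unfold Bf.add
    cases p with
    | mk a x => simp [f.2.1 x]

theorem add_def (p q : Bf f) : p + q = ⟨p.a + p.x • q.a + f.1 p.x q.x, p.x * q.x⟩ := rfl

theorem zero_def : (0 : Bf f) = ⟨0, 1⟩ := rfl

end Bf

/-- The inclusion `κ_f : A → B_f`, `a ↦ (a, 1)`. -/
def kappaF (f : Cocycle M A) : A →+ Bf f where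
  toFun a := ⟨a, 1⟩
  map_zero' := rfl
  map_add' a b := by
    rw [Bf.add_def]
    simp [f.2.2.1]

/-- The projection `σ_f : B_f → M`, `(a, x) ↦ x`. -/
def sigmaF (f : Cocycle M A) : Bf f → M := fun p => p.x

end Cocycles

section ExtOfCocycle

variable {M : Type u} {A : Type v} [Monoid M] [AddCommMonoid A] [DistribMulAction M A]

/-- The Schreier extension `E_f : A →^{κ_f} B_f →^{σ_f} M` of the `M`-semimodule `A` by `M`
associated with a `2`-cocycle `f`. -/
def extOfCocycle (f : Cocycle M A) : SchreierExtension M A where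
  B := Bf f
  κ := kappaF f
  σ := sigmaF f
  sigma_zero := rfl
  sigma_add _ _ := rfl
  kappa_inj a b h := congrArg Bf.a h
  sigma_surj x := ⟨⟨0, x⟩, rfl⟩
  range_eq b := by
    constructor
    · intro h
      exact ⟨b.a, by cases b; cases h; rfl⟩
    · rintro ⟨a, rfl⟩
      rfl
  rep_exists x := by
    refine ⟨⟨0, x⟩, rfl, fun b hb => ⟨b.a, ?_, ?_⟩⟩
    · cases b with
      | mk a y =>
        have hx : y = x := hb
        subst hx
        show Bf.mk a y = kappaF f a + ⟨0, y⟩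
        rw [show kappaF f a = ⟨a, 1⟩ from rfl, Bf.add_def]
        simp [f.2.2.1]
    · intro a' ha'
      rw [show kappaF f a' = ⟨a', 1⟩ from rfl, Bf.add_def] at ha'
      have := congrArg Bf.a ha'
      simpa [f.2.2.1] using this.symm
  compat a b := by
    show b + kappaF f a = kappaF f (b.x • a) + b
    rw [show kappaF f a = ⟨a, 1⟩ from rfl, show kappaF f (b.x • a) = ⟨b.x • a, 1⟩ from rfl,
      Bf.add_def, Bf.add_def]
    simp [f.2.1, f.2.2.1, add_comm]

end ExtOfCocycle

section Semidirect

variable (M : Type u) (A : Type v) [Monoid M] [AddCommMonoid A] [DistribMulAction M A]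

/-- The underlying set `A × M` of the semidirect product `A ⋊ M`. -/
@[ext] structure SemidirectCarrier where
  a : A
  x : M

namespace SemidirectCarrier

variable {M A}

/-- The composition `(a₁, x) + (a₂, y) = (a₁ + x • a₂, x * y)` on `A ⋊ M`. -/
protected def add (p q : SemidirectCarrier M A) : SemidirectCarrier M A :=
  ⟨p.a + p.x • q.a, p.x * q.x⟩

instance : Zero (SemidirectCarrier M A) := ⟨⟨0, 1⟩⟩
instance : Add (SemidirectCarrier M A) := ⟨SemidirectCarrier.add⟩

instance : AddMonoid (SemidirectCarrier M A) where
  nsmul := nsmulRec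
  add_assoc p q r := by
    show SemidirectCarrier.add (SemidirectCarrier.add p q) r
      = SemidirectCarrier.add p (SemidirectCarrier.add q r)
    unfold SemidirectCarrier.add
    simp only [SemidirectCarrier.mk.injEq]
    exact ⟨by rw [smul_add, mul_smul]; abel, mul_assoc _ _ _⟩
  zero_add p := by
    show SemidirectCarrier.add ⟨0, 1⟩ p = p
    unfold SemidirectCarrier.add
    cases p with
    | mk a x => simp
  add_zero p := by
    show SemidirectCarrier.add p ⟨0, 1⟩ = p
    unfold SemidirectCarrier.add
    cases p with
    | mk a x => simp

theorem add_def (p q : SemidirectCarrier M A) : p + q = ⟨p.a + p.x • q.a, p.x * q.x⟩ := rfl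

end SemidirectCarrier

/-- The semidirect product extension `0 : A →^ι A ⋊ M →^π M`, with `ι a = (a, 1)` and
`π (a, x) = x`. -/
def semidirectExtension : SchreierExtension M A where
  B := SemidirectCarrier M A
  κ :=
    { toFun := fun a => ⟨a, 1⟩
      map_zero' := rfl
      map_add' := fun a b => by rw [SemidirectCarrier.add_def]; simp }
  σ := fun p => p.x
  sigma_zero := rfl
  sigma_add _ _ := rfl
  kappa_inj a b h := congrArg SemidirectCarrier.a h
  sigma_surj x := ⟨⟨0, x⟩, rfl⟩
  range_eq b := by
    constructor
    · intro h
      exact ⟨b.a, by cases b; cases h; rfl⟩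
    · rintro ⟨a, rfl⟩
      rfl
  rep_exists x := by
    refine ⟨⟨0, x⟩, rfl, fun b hb => ⟨b.a, ?_, ?_⟩⟩
    · cases b with
      | mk a y =>
        have hx : y = x := hb
        subst hx
        show SemidirectCarrier.mk a y = SemidirectCarrier.add ⟨a, 1⟩ ⟨0, y⟩
        unfold SemidirectCarrier.add
        simp
    · intro a' ha'
      have := congrArg SemidirectCarrier.a ha'
      simpa [SemidirectCarrier.add_def] using this.symm
  compat a b := by
    show SemidirectCarrier.add b ⟨a, 1⟩ = SemidirectCarrier.add ⟨b.x • a, 1⟩ b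
    unfold SemidirectCarrier.add
    simp [add_comm]

end Semidirect

/-! `β (a, x) = κ a + u x` is a bijection `B_f → B` because every element of `B` has a unique
normal form `κ a + u x`; transporting the associativity and unit laws of `B` along it shows
that the factor set is a normalized cocycle and that `β` is additive.  A bijective morphism
`(1_A, β, 1_M)` automatically carries representatives to representatives. -/

section FactorSet

variable {M : Type u} {A : Type v} [Monoid M] [AddCommMonoid A] [DistribMulAction M A]

namespace SchreierExtension

variable {E : SchreierExtension M A}

theorem sigma_kappa_add (a : A) (b : E.B) : E.σ (E.κ a + b) = E.σ b := by
  rw [E.sigma_add, (E.range_eq _).mpr ⟨a, rfl⟩, one_mul]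

theorem add_kappa_of_sigma_eq {x : M} {b : E.B} (hb : E.σ b = x) (a : A) :
    b + E.κ a = E.κ (x • a) + b := by
  rw [E.compat, hb]

theorem IsRep.kappa_add_injective {x : M} {w : E.B} (hw : E.IsRep x w) :
    Function.Injective fun a => E.κ a + w := by
  intro a a' h
  obtain ⟨c, -, hc⟩ := hw.2 (E.κ a + w) (by rw [sigma_kappa_add, hw.1])
  exact (hc a rfl).trans (hc a' h).symm

end SchreierExtension

theorem isSchreierHom_id_of_bijective {E E' : SchreierExtension M A} {β : E.B →+ E'.B}
    (hκ : ∀ a, β (E.κ a) = E'.κ a) (hσ : ∀ b, E'.σ (β b) = E.σ b)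
    (hβ : Function.Bijective β) : IsSchreierHom E E' (AddMonoidHom.id A) β := by
  refine ⟨hκ, hσ, fun x v hv => ⟨(hσ v).trans hv.1, fun b hb => ?_⟩⟩
  obtain ⟨b₀, rfl⟩ := hβ.2 b
  obtain ⟨c, hc, hc_unique⟩ := hv.2 b₀ ((hσ b₀).symm.trans hb)
  have hβ_kappa_add : ∀ d, E'.κ d + β v = β (E.κ d + v) := fun d => by rw [map_add, hκ]
  exact ⟨c, (congrArg β hc).trans (hβ_kappa_add c).symm,
    fun d hd => hc_unique d (hβ.1 (hd.trans (hβ_kappa_add d)))⟩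

variable {E : SchreierExtension M A} {u : M → E.B} {f : M → M → A}

theorem isCocycle_factorSet (hu : ∀ x, E.IsRep x (u x)) (hu1 : u 1 = 0)
    (hfs : ∀ x y, u x + u y = E.κ (f x y) + u (x * y)) : IsCocycle M A f := by
  refine ⟨fun x => (hu x).kappa_add_injective ?_, fun y => (hu y).kappa_add_injective ?_,
    fun x y z => (hu (x * y * z)).kappa_add_injective ?_⟩
  · simpa [hu1] using (hfs x 1).symm
  · simpa [hu1] using (hfs 1 y).symm
  · calc E.κ (x • f y z + f x (y * z)) + u (x * y * z)
        = E.κ (x • f y z) + u x + u (y * z) := by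
          rw [map_add, mul_assoc, add_assoc, ← hfs, add_assoc]
      _ = u x + u y + u z := by
          rw [← E.add_kappa_of_sigma_eq (hu x).1, add_assoc, add_assoc, hfs]
      _ = E.κ (f (x * y) z + f x y) + u (x * y * z) := by
          rw [hfs, add_assoc, hfs, ← add_assoc, ← map_add, add_comm (f x y)]

def factorSetHom (hσu : ∀ x, E.σ (u x) = x) (hu1 : u 1 = 0)
    (hfs : ∀ x y, u x + u y = E.κ (f x y) + u (x * y)) (hf : IsCocycle M A f) :
    Bf (⟨f, hf⟩ : Cocycle M A) →+ E.B where
  toFun p := E.κ p.a + u p.x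
  map_zero' := by simp [Bf.zero_def, hu1]
  map_add' p q := by
    rw [Bf.add_def]
    calc E.κ (p.a + p.x • q.a + f p.x q.x) + u (p.x * q.x)
        = E.κ p.a + (E.κ (p.x • q.a) + u p.x) + u q.x := by
          rw [map_add, map_add, add_assoc _ (E.κ (f _ _)), ← hfs, add_assoc, add_assoc,
            add_assoc]
      _ = E.κ p.a + u p.x + (E.κ q.a + u q.x) := by
          rw [← E.add_kappa_of_sigma_eq (hσu p.x), add_assoc, add_assoc, add_assoc]

theorem factorSetHom_bijective (hu : ∀ x, E.IsRep x (u x)) (hu1 : u 1 = 0)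
    (hfs : ∀ x y, u x + u y = E.κ (f x y) + u (x * y)) (hf : IsCocycle M A f) :
    Function.Bijective (factorSetHom (fun x => (hu x).1) hu1 hfs hf) := by
  refine ⟨fun ⟨a, x⟩ ⟨a', x'⟩ h => ?_, fun b => ?_⟩
  · change E.κ a + u x = E.κ a' + u x' at h
    obtain rfl : x = x' := by
      simpa only [SchreierExtension.sigma_kappa_add, (hu _).1] using congrArg E.σ h
    rw [(hu x).kappa_add_injective h]
  · obtain ⟨a, ha, -⟩ := (hu (E.σ b)).2 b rfl
    exact ⟨⟨a, E.σ b⟩, ha.symm⟩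

theorem isSchreierHom_factorSetHom (hu : ∀ x, E.IsRep x (u x)) (hu1 : u 1 = 0)
    (hfs : ∀ x y, u x + u y = E.κ (f x y) + u (x * y)) (hf : IsCocycle M A f) :
    IsSchreierHom (extOfCocycle ⟨f, hf⟩) E (AddMonoidHom.id A)
      (factorSetHom (fun x => (hu x).1) hu1 hfs hf) := by
  refine isSchreierHom_id_of_bijective (fun a => ?_) (fun p => ?_)
    (factorSetHom_bijective hu hu1 hfs hf)
  · show E.κ a + u 1 = E.κ a
    rw [hu1, add_zero]
  · show E.σ (E.κ p.a + u p.x) = p.x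
    rw [SchreierExtension.sigma_kappa_add, (hu p.x).1]

end FactorSet

/-- Let `M` be a monoid and `E : A →^κ B →^σ M` a Schreier extension of an `M`-semimodule
`A` by `M`.  Choose representatives `u x` (`x ∈ M`) with `u 1 = 0` and let `f` be the
corresponding factor set (`u x + u y = κ (f (x, y)) + u (x * y)`).  Then `f` is a
`2`-cocycle, the map `β : B_f → B`, `β (a, x) = κ a + u x`, is a monoid homomorphism, and
`(1_A, β, 1_M)` is a morphism of extensions; hence `E_f` is congruent to `E`. -/
theorem extOfFactorSet_congruent {M : Type u} {A : Type v}
    [Monoid M] [AddCommMonoid A] [DistribMulAction M A]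
    (E : SchreierExtension M A) (u : M → E.B)
    (hu : ∀ x : M, E.IsRep x (u x)) (hu1 : u 1 = 0)
    (f : M → M → A)
    (hfs : ∀ x y : M, u x + u y = E.κ (f x y) + u (x * y)) :
    ∃ hf : IsCocycle M A f,
      ∃ β : Bf (⟨f, hf⟩ : Cocycle M A) →+ E.B,
        (∀ p : Bf (⟨f, hf⟩ : Cocycle M A), β p = E.κ p.a + u p.x) ∧
        IsSchreierHom (extOfCocycle ⟨f, hf⟩) E (AddMonoidHom.id A) β ∧
        SchreierCongruent (extOfCocycle ⟨f, hf⟩) E := by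
  have hf := isCocycle_factorSet hu hu1 hfs
  have hβ := isSchreierHom_factorSetHom hu hu1 hfs hf
  exact ⟨hf, _, fun _ => rfl, hβ, _, hβ⟩
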